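/- arXiv:1710.08800 — 7 statements merged into one kernel-verified Lean document; each statement's English description precedes it below -/
import Mathlib

section
/- Let N ≥ 1 and let S_1, …, S_N be finite nonempty sets. Suppose there exists a function t : S_1 × ⋯ × S_N → ℝ such that for every player i, every tuple s_{-i} of components of the other players, and every pair s_i, ŝ_i ∈ S_i, one has t_i(s_i, s_{-i}) − t_i(ŝ_i, s_{-i}) = t(s_i, s_{-i}) − t(ŝ_i, s_{-i}). Then the function T̂(z) = Σ_{s ∈ S_1×⋯×S_N} (∏_{l=1}^N z_l(s_l)) · t(s) is an exact potential for the payoffs T_i: for every player i, every pair of mixed strategies z_i, ẑ_i of player i, and every mixed profile z_{-i} of the other players, T_i(z_i, z_{-i}) − T_i(ẑ_i, z_{-i}) = T̂(z_i, z_{-i}) − T̂(ẑ_i, z_{-i}). -/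
/-!
Since `tᵢ - t` does not depend on player `i`'s own strategy, its multilinear extension factors
through the sum `∑ zᵢ = 1` of player `i`'s weights, and so does not change when `zᵢ` is replaced
by another mixed strategy. Subtracting the extensions of `tᵢ` and `t` gives the claim.
-/

open Finset Function

theorem Finset.sum_mul_eq_sum_mul_of_const {α : Type*} [Fintype α] {R : Type*} [CommSemiring R]
    {K : α → R} (hK : ∀ a b, K a = K b) {v v' : α → R} (hv : ∑ a, v a = ∑ a, v' a) :
    ∑ a, v a * K a = ∑ a, v' a * K a := by
  cases isEmpty_or_nonempty α with
  | inl _ => simp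
  | inr h =>
    obtain ⟨c⟩ := h
    simp only [hK _ c, ← sum_mul, hv]

section MultilinearExtension

variable {ι R : Type*} [DecidableEq ι] {S : ι → Type*}

theorem Equiv.piSplitAt_symm_eq_update (i : ι) (a b : S i) (p : ∀ j : {j // j ≠ i}, S j) :
    (Equiv.piSplitAt i S).symm (a, p) = update ((Equiv.piSplitAt i S).symm (b, p)) i a := by
  funext j
  by_cases h : j = i
  · subst h; simp
  · simp [h]

variable [Fintype ι]

theorem prod_update_apply [CommMonoid R] (w : ∀ j, S j → R) (i : ι) (v : S i → R)
    (x : ∀ j, S j) :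
    ∏ l, update w i v l (x l) = v (x i) * ∏ l ∈ univ.erase i, w l (x l) := by
  rw [← mul_prod_erase _ _ (mem_univ i), update_self]
  congr 1
  exact prod_congr rfl fun l hl => by rw [update_of_ne (ne_of_mem_erase hl)]

variable [∀ i, Fintype (S i)]

def multilinearExt [CommSemiring R] (w : ∀ j, S j → R) (f : (∀ j, S j) → R) : R :=
  ∑ x, (∏ l, w l (x l)) * f x

theorem multilinearExt_sub [CommRing R] (w : ∀ j, S j → R) (f g : (∀ j, S j) → R) :
    multilinearExt w (f - g) = multilinearExt w f - multilinearExt w g := by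
  simp only [multilinearExt, Pi.sub_apply, mul_sub, sum_sub_distrib]

theorem sum_apply_mul_eq_of_update_invariant [CommSemiring R] {i : ι}
    {H : (∀ j, S j) → R} (hH : ∀ x a, H (update x i a) = H x)
    {v v' : S i → R} (hv : ∑ a, v a = ∑ a, v' a) :
    ∑ x, v (x i) * H x = ∑ x, v' (x i) * H x := by
  have hsplit : ∀ u : S i → R, ∑ x, u (x i) * H x
      = ∑ a, u a * ∑ p, H ((Equiv.piSplitAt i S).symm (a, p)) := fun u => by
    rw [← (Equiv.piSplitAt i S).symm.sum_comp, Fintype.sum_prod_type]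
    simp [mul_sum]
  rw [hsplit, hsplit]
  refine sum_mul_eq_sum_mul_of_const (fun a b => sum_congr rfl fun p _ => ?_) hv
  rw [Equiv.piSplitAt_symm_eq_update i a b, hH]

theorem multilinearExt_update_eq_of_update_invariant [CommSemiring R] (w : ∀ j, S j → R)
    {i : ι} {g : (∀ j, S j) → R} (hg : ∀ x a, g (update x i a) = g x)
    {v v' : S i → R} (hv : ∑ a, v a = ∑ a, v' a) :
    multilinearExt (update w i v) g = multilinearExt (update w i v') g := by
  simp only [multilinearExt, prod_update_apply, mul_assoc]
  refine sum_apply_mul_eq_of_update_invariant (fun x a => ?_) hv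
  rw [hg]
  congr 1
  exact prod_congr rfl fun l hl => by rw [update_of_ne (ne_of_mem_erase hl)]

end MultilinearExtension

theorem potential_function_mixed_extension_general
    {N : ℕ} (S : Fin N → Type*)
    [∀ i, Fintype (S i)]
    (t : (∀ j, S j) → ℝ) (ti : ∀ _ : Fin N, (∀ j, S j) → ℝ)
    (hpot : ∀ (i : Fin N) (x : ∀ j, S j) (x' : S i),
      ti i x - ti i (Function.update x i x') = t x - t (Function.update x i x'))
    (z : ∀ j, S j → ℝ) (hz1 : ∀ j, ∑ xj, z j xj = 1)
    (i : Fin N) (zi' : S i → ℝ) (hz1' : ∑ xi, zi' xi = 1) :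
    (∑ x : ∀ j, S j, (∏ l, z l (x l)) * ti i x)
      - (∑ x : ∀ j, S j, (∏ l, Function.update z i zi' l (x l)) * ti i x)
    = (∑ x : ∀ j, S j, (∏ l, z l (x l)) * t x)
      - (∑ x : ∀ j, S j, (∏ l, Function.update z i zi' l (x l)) * t x) := by
  have hinv : ∀ x a, (ti i - t) (update x i a) = (ti i - t) x := fun x a => by
    simp only [Pi.sub_apply]
    linarith [hpot i x a]
  have hext := multilinearExt_update_eq_of_update_invariant z hinv
    ((hz1 i).trans hz1'.symm)
  rw [update_eq_self, multilinearExt_sub, multilinearExt_sub] at hext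
  change multilinearExt z (ti i) - multilinearExt (update z i zi') (ti i)
    = multilinearExt z t - multilinearExt (update z i zi') t
  linarith

/-- If there is a function `t` such that for every player `i`,
every tuple of the other players' components, and every pair of own components,
the payoff differences of `t i` agree with those of `t`, then the multilinear
extension `T̂(z) = ∑_s (∏_l z_l(s_l)) t(s)` is an exact potential for the
expected payoffs `T_i(z) = ∑_s (∏_l z_l(s_l)) t_i(s)`. -/
theorem potential_function_mixed_extension
    {N : ℕ} (hN : 1 ≤ N) (S : Fin N → Type*)
    [∀ i, Fintype (S i)] [∀ i, Nonempty (S i)]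
    (t : (∀ j, S j) → ℝ) (ti : ∀ _ : Fin N, (∀ j, S j) → ℝ)
    (hpot : ∀ (i : Fin N) (x : ∀ j, S j) (x' : S i),
      ti i x - ti i (Function.update x i x') = t x - t (Function.update x i x'))
    (z : ∀ j, S j → ℝ) (hz0 : ∀ j xj, 0 ≤ z j xj) (hz1 : ∀ j, ∑ xj, z j xj = 1)
    (i : Fin N) (zi' : S i → ℝ) (hz0' : ∀ xi, 0 ≤ zi' xi) (hz1' : ∑ xi, zi' xi = 1) :
    (∑ x : ∀ j, S j, (∏ l, z l (x l)) * ti i x)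
      - (∑ x : ∀ j, S j, (∏ l, Function.update z i zi' l (x l)) * ti i x)
    = (∑ x : ∀ j, S j, (∏ l, z l (x l)) * t x)
      - (∑ x : ∀ j, S j, (∏ l, Function.update z i zi' l (x l)) * t x) :=
  potential_function_mixed_extension_general S t ti hpot z hz1 i zi' hz1'
end

section
/- Let ι be a finite set of players, for each i ∈ ι let Z_i be a finite nonempty strategy set, and let T_i : (Π_{j∈ι} Z_j) → ℝ be payoff functions admitting an exact potential T̂. Then there is no infinite improvement path: there is no sequence z : ℕ → Π_j Z_j such that for every n there exists a player i with z(n+1) differing from z(n) only in the i-th coordinate and T_i(z(n+1)) > T_i(z(n)). -/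
/-! An exact potential converts every unilateral strict improvement of a player's payoff into a
strict increase of the potential, so along an improvement path the potential is strictly
increasing. The profiles of the path are then pairwise distinct, which is impossible in the finite
space of profiles. -/

theorem Finite.not_forall_lt_comp_succ {α β : Type*} [Finite α] [Preorder β] (f : α → β)
    (z : ℕ → α) : ¬ ∀ n, f (z n) < f (z (n + 1)) := fun h =>
  not_injective_infinite_finite z (strictMono_nat_of_lt_succ h).injective.of_comp

theorem potential_lt_of_improvement {ι : Type*} [DecidableEq ι] {Z : ι → Type*}
    {T : ι → (∀ j, Z j) → ℝ} {Tpot : (∀ j, Z j) → ℝ}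
    (hpot : ∀ (i : ι) (z : ∀ j, Z j) (v : Z i),
      T i z - T i (Function.update z i v) = Tpot z - Tpot (Function.update z i v))
    {z z' : ∀ j, Z j} {i : ι} (hoff : ∀ j, j ≠ i → z' j = z j) (hlt : T i z < T i z') :
    Tpot z < Tpot z' := by
  have hupdate : z' = Function.update z i (z' i) := Function.eq_update_iff.mpr ⟨rfl, hoff⟩
  have hdiff := hpot i z (z' i)
  rw [← hupdate] at hdiff
  linarith

theorem no_infinite_improvement_path_general
    {ι : Type*} [Fintype ι] [DecidableEq ι] (Z : ι → Type*)
    [∀ i, Fintype (Z i)]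
    (T : ι → (∀ j, Z j) → ℝ) (Tpot : (∀ j, Z j) → ℝ)
    (hpot : ∀ (i : ι) (z : ∀ j, Z j) (v : Z i),
      T i z - T i (Function.update z i v) = Tpot z - Tpot (Function.update z i v)) :
    ¬ ∃ z : ℕ → ∀ j, Z j, ∀ n : ℕ, ∃ i : ι,
        (∀ j, j ≠ i → z (n + 1) j = z n j) ∧ T i (z n) < T i (z (n + 1)) := by
  rintro ⟨z, hz⟩
  refine Finite.not_forall_lt_comp_succ Tpot z fun n => ?_
  obtain ⟨i, hoff, hlt⟩ := hz n
  exact potential_lt_of_improvement hpot hoff hlt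

/-- In a finite game admitting an exact potential there is no infinite
improvement path: no sequence of profiles in which each successive profile is obtained
by a single player unilaterally deviating and strictly increasing their own payoff. -/
theorem no_infinite_improvement_path
    {ι : Type*} [Fintype ι] [DecidableEq ι] (Z : ι → Type*)
    [∀ i, Fintype (Z i)] [∀ i, Nonempty (Z i)]
    (T : ι → (∀ j, Z j) → ℝ) (Tpot : (∀ j, Z j) → ℝ)
    (hpot : ∀ (i : ι) (z : ∀ j, Z j) (v : Z i),
      T i z - T i (Function.update z i v) = Tpot z - Tpot (Function.update z i v)) :
    ¬ ∃ z : ℕ → ∀ j, Z j, ∀ n : ℕ, ∃ i : ι,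
        (∀ j, j ≠ i → z (n + 1) j = z n j) ∧ T i (z n) < T i (z (n + 1)) :=
  no_infinite_improvement_path_general Z T Tpot hpot
end

section
/- Let ι be a set of players, for each i ∈ ι let Z_i be a nonempty strategy set, and let T_i : (Π_{j∈ι} Z_j) → ℝ admit an exact potential T̂ that is bounded above by B ∈ ℝ. Let ε > 0 and let z(0), z(1), …, z(n) be a finite sequence of profiles such that for each 0 ≤ k < n there is a player i with z(k+1) differing from z(k) only in the i-th coordinate and T_i(z(k+1)) > T_i(z(k)) + ε. Then n ≤ (B − T̂(z(0)))/ε. -/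
/-! Each improvement step is a unilateral deviation, so by exactness the potential rises by the
deviator's gain, hence by more than `ε`. After `n` steps the potential has grown by at least
`n ε`, and it can never exceed `B`. -/

theorem add_nsmul_le_of_forall_add_le_succ {α : Type*} [AddCommMonoid α] [Preorder α]
    [IsOrderedAddMonoid α] {f : ℕ → α} {ε : α} {n : ℕ}
    (hf : ∀ k < n, f k + ε ≤ f (k + 1)) : f 0 + n • ε ≤ f n := by
  induction n with
  | zero => simp
  | succ n ih =>
    calc f 0 + (n + 1) • ε = (f 0 + n • ε) + ε := by rw [succ_nsmul, add_assoc]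
      _ ≤ f n + ε := add_le_add_left (ih fun k hk ↦ hf k (by omega)) ε
      _ ≤ f (n + 1) := hf n n.lt_succ_self

def IsExactPotential {ι : Type*} [DecidableEq ι] {Z : ι → Type*}
    (T : ι → (∀ j, Z j) → ℝ) (Tpot : (∀ j, Z j) → ℝ) : Prop :=
  ∀ (i : ι) (z : ∀ j, Z j) (v : Z i),
    T i z - T i (Function.update z i v) = Tpot z - Tpot (Function.update z i v)

theorem IsExactPotential.sub_eq_sub_of_forall_ne {ι : Type*} [DecidableEq ι] {Z : ι → Type*}
    {T : ι → (∀ j, Z j) → ℝ} {Tpot : (∀ j, Z j) → ℝ} (hpot : IsExactPotential T Tpot)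
    {i : ι} {z z' : ∀ j, Z j} (hz' : ∀ j, j ≠ i → z' j = z j) :
    Tpot z' - Tpot z = T i z' - T i z := by
  have hupdate : Function.update z i (z' i) = z' :=
    Function.update_eq_iff.mpr ⟨rfl, fun j hj ↦ (hz' j hj).symm⟩
  have := hpot i z (z' i)
  rw [hupdate] at this
  linarith

theorem improvement_path_length_bound_general
    {ι : Type*} [DecidableEq ι] (Z : ι → Type*)
    (T : ι → (∀ j, Z j) → ℝ) (Tpot : (∀ j, Z j) → ℝ)
    (hpot : ∀ (i : ι) (z : ∀ j, Z j) (v : Z i),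
      T i z - T i (Function.update z i v) = Tpot z - Tpot (Function.update z i v))
    (B : ℝ) (hB : ∀ z : ∀ j, Z j, Tpot z ≤ B)
    (ε : ℝ) (hε : 0 < ε) (n : ℕ) (z : ℕ → ∀ j, Z j)
    (hstep : ∀ k < n, ∃ i : ι,
      (∀ j, j ≠ i → z (k + 1) j = z k j) ∧ T i (z k) + ε < T i (z (k + 1))) :
    (n : ℝ) ≤ (B - Tpot (z 0)) / ε := by
  have hpot_step : ∀ k < n, Tpot (z k) + ε ≤ Tpot (z (k + 1)) := by
    intro k hk
    obtain ⟨i, hunilateral, hgain⟩ := hstep k hk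
    have := (show IsExactPotential T Tpot from hpot).sub_eq_sub_of_forall_ne hunilateral
    linarith
  have hgrowth := add_nsmul_le_of_forall_add_le_succ hpot_step
  rw [nsmul_eq_mul] at hgrowth
  rw [le_div_iff₀ hε]
  linarith [hB (z n)]

/-- If a game admits an exact potential bounded above by `B`, then any
improvement path along which each deviating player gains more than `ε > 0` has length
at most `(B − T̂(z 0))/ε`. -/
theorem improvement_path_length_bound
    {ι : Type*} [DecidableEq ι] (Z : ι → Type*) [∀ i, Nonempty (Z i)]
    (T : ι → (∀ j, Z j) → ℝ) (Tpot : (∀ j, Z j) → ℝ)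
    (hpot : ∀ (i : ι) (z : ∀ j, Z j) (v : Z i),
      T i z - T i (Function.update z i v) = Tpot z - Tpot (Function.update z i v))
    (B : ℝ) (hB : ∀ z : ∀ j, Z j, Tpot z ≤ B)
    (ε : ℝ) (hε : 0 < ε) (n : ℕ) (z : ℕ → ∀ j, Z j)
    (hstep : ∀ k < n, ∃ i : ι,
      (∀ j, j ≠ i → z (k + 1) j = z k j) ∧ T i (z k) + ε < T i (z (k + 1))) :
    (n : ℝ) ≤ (B - Tpot (z 0)) / ε :=
  improvement_path_length_bound_general Z T Tpot hpot B hB ε hε n z hstep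
end

section
/- Let (Ω, F, P) be a probability space, let k ≥ 1 be an integer, let N₀ > 0, and let 0 < μ ≤ b. Let (X_j)_{j≥1} be independent random variables with 0 ≤ X_j ≤ b almost surely and E[X_j] ≥ μ for every j. Then there exist constants c₁ > 0, c₂ > 0 and a natural number N* such that for all N ≥ N*, c₁/N^k ≤ E[ (Σ_{j=1}^N X_j + N₀)^{−k} ] ≤ c₂/N^k. -/
/-!
The sum `S_N = ∑_{j<N} X_j` lies in `[0, bN]`, so the integrand is at least `((b + N₀) N)^{-k}`.
For the upper bound split on the event `S_N ≤ μN/2`: off it the integrand is at most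
`(μN/2)^{-k}`, on it at most `N₀^{-k}`, and by Hoeffding's inequality the event has probability
at most `exp(-μ²/(2b²))^N`, which is eventually below `N^{-k}`.
-/

open MeasureTheory ProbabilityTheory Filter Finset

theorem eventually_pow_le_inv_pow {r : ℝ} (hr₀ : 0 ≤ r) (hr₁ : r < 1) (k : ℕ) :
    ∀ᶠ N : ℕ in atTop, r ^ N ≤ ((N : ℝ) ^ k)⁻¹ := by
  filter_upwards [(tendsto_pow_const_mul_const_pow_of_lt_one k hr₀ hr₁).eventually
    (ge_mem_nhds one_pos), eventually_ge_atTop 1] with N hN hN₁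
  rwa [← one_div, le_div_iff₀' (by positivity)]

section

variable {Ω : Type*} [MeasurableSpace Ω] {P : Measure Ω}

/-- Hoeffding's inequality, lower tail. -/
theorem measureReal_sum_range_le_sum_integral_sub_le [IsProbabilityMeasure P]
    {X : ℕ → Ω → ℝ} (hindep : iIndepFun X P) (hmeas : ∀ j, AEMeasurable (X j) P) {a b : ℝ}
    (hbdd : ∀ j, ∀ᵐ ω ∂P, X j ω ∈ Set.Icc a b) (N : ℕ) {ε : ℝ} (hε : 0 ≤ ε) :
    P.real {ω | ∑ j ∈ range N, X j ω ≤ ∑ j ∈ range N, P[X j] - ε} ≤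
      Real.exp (-2 * ε ^ 2 / (N * (b - a) ^ 2)) := by
  have hdev : iIndepFun (fun j ↦ (fun x ↦ -(x - P[X j])) ∘ X j) P :=
    hindep.comp (fun j x ↦ -(x - P[X j])) (fun j ↦ by fun_prop)
  have hupper := HasSubgaussianMGF.measure_sum_range_ge_le_of_iIndepFun hdev
    (fun j _ ↦ (hasSubgaussianMGF_of_mem_Icc (hmeas j) (hbdd j)).neg) (n := N) hε
  have hset : {ω | ∑ j ∈ range N, X j ω ≤ ∑ j ∈ range N, P[X j] - ε} =
      {ω | ε ≤ ∑ j ∈ range N, -(X j ω - P[X j])} := by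
    ext ω
    simp only [Set.mem_ofPred_eq, sum_neg_distrib, sum_sub_distrib]
    constructor <;> intro h <;> linarith
  rw [hset]
  refine hupper.trans_eq (congrArg Real.exp ?_)
  have hvar : 2 * N * (((‖b - a‖₊ / 2) ^ 2 : NNReal) : ℝ) = N * (b - a) ^ 2 / 2 := by
    push_cast [coe_nnnorm, Real.norm_eq_abs]
    rw [div_pow, sq_abs]
    ring
  rw [hvar, div_div_eq_mul_div]
  ring

theorem measureReal_sum_range_le_half_le [IsProbabilityMeasure P] {X : ℕ → Ω → ℝ}
    (hindep : iIndepFun X P) (hmeas : ∀ j, AEMeasurable (X j) P) {μ b : ℝ} (hμ : 0 ≤ μ)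
    (hb : 0 < b) (hbdd : ∀ j, ∀ᵐ ω ∂P, X j ω ∈ Set.Icc 0 b) (hmean : ∀ j, μ ≤ P[X j]) (N : ℕ) :
    P.real {ω | ∑ j ∈ range N, X j ω ≤ μ * N / 2} ≤ Real.exp (-(μ ^ 2 / (2 * b ^ 2))) ^ N := by
  have hsum_mean : μ * N ≤ ∑ j ∈ range N, P[X j] := by
    simpa [mul_comm] using card_nsmul_le_sum (range N) (fun j ↦ P[X j]) μ (fun j _ ↦ hmean j)
  calc P.real {ω | ∑ j ∈ range N, X j ω ≤ μ * N / 2}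
      ≤ P.real {ω | ∑ j ∈ range N, X j ω ≤ ∑ j ∈ range N, P[X j] - μ * N / 2} :=
        measureReal_mono (Set.ofPred_subset_ofPred.2 fun ω hω ↦ by linarith)
    _ ≤ Real.exp (-2 * (μ * N / 2) ^ 2 / (N * (b - 0) ^ 2)) :=
        measureReal_sum_range_le_sum_integral_sub_le hindep hmeas hbdd N (by positivity)
    _ = Real.exp (-(μ ^ 2 / (2 * b ^ 2))) ^ N := by
        rw [← Real.exp_nat_mul]
        congr 1
        rcases N.eq_zero_or_pos with rfl | hN
        · simp
        · rw [sub_zero]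
          field_simp

theorem ae_sum_range_mem_Icc {X : ℕ → Ω → ℝ} {a b : ℝ}
    (hbdd : ∀ j, ∀ᵐ ω ∂P, X j ω ∈ Set.Icc a b) (N : ℕ) :
    ∀ᵐ ω ∂P, ∑ j ∈ range N, X j ω ∈ Set.Icc (N * a) (N * b) := by
  filter_upwards [ae_all_iff.2 hbdd] with ω hω
  constructor
  · simpa using card_nsmul_le_sum (range N) _ a fun j _ ↦ (hω j).1
  · simpa using sum_le_card_nsmul (range N) _ b fun j _ ↦ (hω j).2

theorem integrable_inv_pow_add [IsFiniteMeasure P] {S : Ω → ℝ} (hS : AEMeasurable S P)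
    (hS₀ : ∀ᵐ ω ∂P, 0 ≤ S ω) {N₀ : ℝ} (hN₀ : 0 < N₀) (k : ℕ) :
    Integrable (fun ω ↦ ((S ω + N₀) ^ k)⁻¹) P := by
  refine .of_bound (by fun_prop) (N₀ ^ k)⁻¹ ?_
  filter_upwards [hS₀] with ω hω
  rw [Real.norm_of_nonneg (by positivity)]
  gcongr
  linarith

theorem inv_pow_add_le_integral [IsProbabilityMeasure P] {S : Ω → ℝ} (hS : AEMeasurable S P)
    (hS₀ : ∀ᵐ ω ∂P, 0 ≤ S ω) {M : ℝ} (hSM : ∀ᵐ ω ∂P, S ω ≤ M) {N₀ : ℝ} (hN₀ : 0 < N₀) (k : ℕ) :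
    ((M + N₀) ^ k)⁻¹ ≤ ∫ ω, ((S ω + N₀) ^ k)⁻¹ ∂P := by
  calc ((M + N₀) ^ k)⁻¹ = ∫ _, ((M + N₀) ^ k)⁻¹ ∂P := by simp
    _ ≤ ∫ ω, ((S ω + N₀) ^ k)⁻¹ ∂P := by
      refine integral_mono_ae (integrable_const _) (integrable_inv_pow_add hS hS₀ hN₀ k) ?_
      filter_upwards [hS₀, hSM] with ω hω₀ hωM
      gcongr

theorem integral_inv_pow_add_le [IsProbabilityMeasure P] {S : Ω → ℝ} (hS : Measurable S)
    (hS₀ : ∀ᵐ ω ∂P, 0 ≤ S ω) {N₀ θ : ℝ} (hN₀ : 0 < N₀) (hθ : 0 < θ) (k : ℕ) :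
    ∫ ω, ((S ω + N₀) ^ k)⁻¹ ∂P ≤ P.real {ω | S ω ≤ θ} * (N₀ ^ k)⁻¹ + (θ ^ k)⁻¹ := by
  set A := {ω | S ω ≤ θ}
  have hA : MeasurableSet A := measurableSet_le hS measurable_const
  have hsplit : ∀ᵐ ω ∂P, ((S ω + N₀) ^ k)⁻¹ ≤ A.indicator (fun _ ↦ (N₀ ^ k)⁻¹) ω + (θ ^ k)⁻¹ := by
    filter_upwards [hS₀] with ω hω
    by_cases hωA : ω ∈ A
    · rw [Set.indicator_of_mem hωA]
      have : ((S ω + N₀) ^ k)⁻¹ ≤ (N₀ ^ k)⁻¹ := by gcongr; linarith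
      have : 0 ≤ (θ ^ k)⁻¹ := by positivity
      linarith
    · rw [Set.indicator_of_notMem hωA, zero_add]
      have : θ < S ω := lt_of_not_ge hωA
      gcongr
      linarith
  calc ∫ ω, ((S ω + N₀) ^ k)⁻¹ ∂P
      ≤ ∫ ω, (A.indicator (fun _ ↦ (N₀ ^ k)⁻¹) ω + (θ ^ k)⁻¹) ∂P :=
        integral_mono_ae (integrable_inv_pow_add hS.aemeasurable hS₀ hN₀ k)
          (((integrable_const _).indicator hA).add (integrable_const _)) hsplit
    _ = P.real A * (N₀ ^ k)⁻¹ + (θ ^ k)⁻¹ := by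
        rw [integral_add ((integrable_const _).indicator hA) (integrable_const _),
          integral_indicator_const _ hA, integral_const]
        simp

end

theorem inv_pow_sum_expectation_theta_general
    {Ω : Type*} [MeasurableSpace Ω] (P : Measure Ω) [IsProbabilityMeasure P]
    (k : ℕ) (N₀ : ℝ) (hN₀ : 0 < N₀)
    (μ b : ℝ) (hμ : 0 < μ) (hμb : μ ≤ b)
    (X : ℕ → Ω → ℝ) (hmeas : ∀ j, Measurable (X j))
    (hindep : iIndepFun X P)
    (hbdd : ∀ j, ∀ᵐ ω ∂P, 0 ≤ X j ω ∧ X j ω ≤ b)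
    (hmean : ∀ j, μ ≤ ∫ ω, X j ω ∂P) :
    ∃ c₁ > (0 : ℝ), ∃ c₂ > (0 : ℝ), ∃ Nstar : ℕ, ∀ N : ℕ, Nstar ≤ N →
      c₁ / (N : ℝ) ^ k ≤ (∫ ω, ((∑ j ∈ Finset.range N, X j ω + N₀) ^ k)⁻¹ ∂P) ∧
      (∫ ω, ((∑ j ∈ Finset.range N, X j ω + N₀) ^ k)⁻¹ ∂P) ≤ c₂ / (N : ℝ) ^ k := by
  have hb : 0 < b := hμ.trans_le hμb
  have hr : Real.exp (-(μ ^ 2 / (2 * b ^ 2))) < 1 :=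
    Real.exp_lt_one_iff.2 (neg_neg_of_pos (by positivity))
  obtain ⟨Nstar, hNstar⟩ := eventually_atTop.1 <|
    (eventually_pow_le_inv_pow (Real.exp_nonneg _) hr k).and (eventually_ge_atTop 1)
  refine ⟨((b + N₀) ^ k)⁻¹, by positivity, (N₀ ^ k)⁻¹ + (2 / μ) ^ k, by positivity, Nstar,
    fun N hN ↦ ?_⟩
  obtain ⟨htail, hN₁⟩ := hNstar N hN
  have hN₁ : (1 : ℝ) ≤ N := by exact_mod_cast hN₁
  have hS : Measurable fun ω ↦ ∑ j ∈ range N, X j ω := by fun_prop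
  have hS₀ : ∀ᵐ ω ∂P, 0 ≤ ∑ j ∈ range N, X j ω := by
    filter_upwards [ae_sum_range_mem_Icc hbdd N] with ω hω using by simpa using hω.1
  have hSb : ∀ᵐ ω ∂P, ∑ j ∈ range N, X j ω ≤ N * b := by
    filter_upwards [ae_sum_range_mem_Icc hbdd N] with ω hω using hω.2
  constructor
  · calc ((b + N₀) ^ k)⁻¹ / (N : ℝ) ^ k = (((b + N₀) * N) ^ k)⁻¹ := by
          rw [mul_pow, mul_inv, div_eq_mul_inv]
      _ ≤ ((N * b + N₀) ^ k)⁻¹ := by gcongr; nlinarith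
      _ ≤ _ := inv_pow_add_le_integral hS.aemeasurable hS₀ hSb hN₀ k
  · calc _ ≤ P.real {ω | ∑ j ∈ range N, X j ω ≤ μ * N / 2} * (N₀ ^ k)⁻¹ + ((μ * N / 2) ^ k)⁻¹ :=
          integral_inv_pow_add_le hS hS₀ hN₀ (by positivity) k
      _ ≤ ((N : ℝ) ^ k)⁻¹ * (N₀ ^ k)⁻¹ + ((μ * N / 2) ^ k)⁻¹ := by
          gcongr
          exact (measureReal_sum_range_le_half_le hindep (fun j ↦ (hmeas j).aemeasurable) hμ.le
            hb hbdd hmean N).trans htail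
      _ = ((N₀ ^ k)⁻¹ + (2 / μ) ^ k) / (N : ℝ) ^ k := by
          simp only [div_eq_mul_inv, mul_pow, mul_inv, inv_inv, inv_pow]
          ring

/-- For independent random variables `X_j` bounded in `[0, b]` a.s. with
means at least `μ > 0`, the expectation `E[(∑_{j<N} X_j + N₀)^{-k}]` is `Θ(N^{-k})`:
eventually bounded between `c₁/N^k` and `c₂/N^k`. -/
theorem inv_pow_sum_expectation_theta
    {Ω : Type*} [MeasurableSpace Ω] (P : Measure Ω) [IsProbabilityMeasure P]
    (k : ℕ) (hk : 1 ≤ k) (N₀ : ℝ) (hN₀ : 0 < N₀)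
    (μ b : ℝ) (hμ : 0 < μ) (hμb : μ ≤ b)
    (X : ℕ → Ω → ℝ) (hmeas : ∀ j, Measurable (X j))
    (hindep : iIndepFun X P)
    (hbdd : ∀ j, ∀ᵐ ω ∂P, 0 ≤ X j ω ∧ X j ω ≤ b)
    (hmean : ∀ j, μ ≤ ∫ ω, X j ω ∂P) :
    ∃ c₁ > (0 : ℝ), ∃ c₂ > (0 : ℝ), ∃ Nstar : ℕ, ∀ N : ℕ, Nstar ≤ N →
      c₁ / (N : ℝ) ^ k ≤ (∫ ω, ((∑ j ∈ Finset.range N, X j ω + N₀) ^ k)⁻¹ ∂P) ∧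
      (∫ ω, ((∑ j ∈ Finset.range N, X j ω + N₀) ^ k)⁻¹ ∂P) ≤ c₂ / (N : ℝ) ^ k :=
  inv_pow_sum_expectation_theta_general P k N₀ hN₀ μ b hμ hμb X hmeas hindep hbdd hmean
end

section
/- Let X be a finite nonempty set, let s : X → ℝ, and let Z be a nonempty compact subset of ℝ^X such that every z ∈ Z satisfies z(x) ≥ 0 for all x and Σ_{x∈X} z(x) = 1. For k ≥ 1 define the linear functional l^k(z) = Σ_{x∈X} (−1)^{k+1} s(x)^k · z(x), set S^0 = Z and S^k = { z ∈ S^{k−1} : l^k(z) ≥ l^k(w) for all w ∈ S^{k−1} }, and let M be the number of distinct values of s on X. Then the set S = ∩_{k=1}^∞ S^k is nonempty, and S = S^M. -/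
open Finset

/-- The `k`-th sensitivity functional `l^k(z) = ∑_x (−1)^{k+1} s(x)^k z(x)`. -/
noncomputable def sensFun {X : Type*} [Fintype X] (s : X → ℝ) (k : ℕ) (z : X → ℝ) : ℝ :=
  ∑ x, (-1 : ℝ) ^ (k + 1) * s x ^ k * z x

/-- The iterated sets of `k`-th sensitive policies: `S^0 = Z` and `S^k` is the set of
maximizers of `l^k` over `S^{k−1}`. -/
def sensSet {X : Type*} [Fintype X] (s : X → ℝ) (Z : Set (X → ℝ)) : ℕ → Set (X → ℝ)
  | 0 => Z
  | k + 1 => {z ∈ sensSet s Z k | ∀ w ∈ sensSet s Z k, sensFun s (k + 1) w ≤ sensFun s (k + 1) z}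

/-!
Write `m_j(z) = ∑ₓ s(x)^j z(x)` for the `j`-th moment, so that `l^j = ± m_j`. On `S^k` every
`m_j` with `j ≤ k` is constant: `m_0 = 1` on `Z`, and `l^j` takes its maximum value everywhere on
`S^j`. Since `s` takes only `M` values, Lagrange interpolation writes `s(x)^n` as a polynomial of
degree `< M` in `s(x)`, so every moment is a fixed linear combination of `m_0, …, m_{M-1}`. Hence
all functionals `l^n` are constant on `S^M`, the sequence `S^k` is constant from `k = M` on, and
`S^M` is nonempty as a maximizer set of a continuous function on a nonempty compact set.
-/

theorem iInter_succ_eq_of_antitone_of_eventually_eq {α : Type*} {S : ℕ → Set α}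
    (hS : Antitone S) {N : ℕ} (hN : ∀ k ≥ N, S k = S N) : ⋂ k, S (k + 1) = S N := by
  refine (Set.iInter_subset _ N).trans (hN (N + 1) N.le_succ).le |>.antisymm ?_
  refine Set.subset_iInter fun k => ?_
  rcases le_total (k + 1) N with h | h
  · exact hS h
  · exact (hN _ h).ge

section Moments

variable {X : Type*} [Fintype X] (s : X → ℝ)

noncomputable def moment (j : ℕ) (z : X → ℝ) : ℝ :=
  ∑ x, s x ^ j * z x

theorem sensFun_eq_neg_one_pow_mul_moment (k : ℕ) (z : X → ℝ) :
    sensFun s k z = (-1) ^ (k + 1) * moment s k z := by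
  simp only [sensFun, moment, mul_sum, mul_assoc]

theorem continuous_sensFun (k : ℕ) : Continuous (sensFun s k) :=
  continuous_finsetSum _ fun x _ => continuous_const.mul (continuous_apply x)

theorem exists_pow_eq_sum_range_card_image {K : Type*} [Field K] [DecidableEq K] (f : X → K)
    (n : ℕ) : ∃ c : ℕ → K, ∀ x, f x ^ n = ∑ j ∈ range #(univ.image f), c j * f x ^ j := by
  set T := univ.image f
  have hinj : Set.InjOn id (T : Set K) := Function.injective_id.injOn
  set p := Lagrange.interpolate T id (· ^ n)
  refine ⟨p.coeff, fun x => ?_⟩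
  have hx : f x ∈ T := mem_image_of_mem f (mem_univ x)
  have hdeg : p.natDegree < #T := by
    have : p.natDegree ≤ #T - 1 :=
      Polynomial.natDegree_le_iff_degree_le.2 (Lagrange.degree_interpolate_le _ hinj)
    have := card_pos.2 ⟨_, hx⟩
    omega
  rw [← Polynomial.eval_eq_sum_range' hdeg]
  exact (Lagrange.eval_interpolate_at_node _ hinj hx).symm

theorem exists_moment_eq_sum_range_card_image (n : ℕ) :
    ∃ c : ℕ → ℝ, ∀ z, moment s n z = ∑ j ∈ range #(univ.image s), c j * moment s j z := by
  obtain ⟨c, hc⟩ := exists_pow_eq_sum_range_card_image s n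
  refine ⟨c, fun z => ?_⟩
  simp only [moment, hc, sum_mul, mul_sum]
  rw [sum_comm]
  exact sum_congr rfl fun j _ => sum_congr rfl fun x _ => by ring

end Moments

section SensSet

variable {X : Type*} [Fintype X] (s : X → ℝ) (Z : Set (X → ℝ))

theorem sensSet_antitone : Antitone (sensSet s Z) :=
  antitone_nat_of_succ_le fun _ _ hz => hz.1

theorem sensSet_succ_eq_inter (k : ℕ) :
    sensSet s Z (k + 1) =
      sensSet s Z k ∩ ⋂ w ∈ sensSet s Z k, {z | sensFun s (k + 1) w ≤ sensFun s (k + 1) z} := by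
  ext z
  simp [sensSet]

theorem isCompact_sensSet (hZ : IsCompact Z) (k : ℕ) : IsCompact (sensSet s Z k) := by
  induction k with
  | zero => exact hZ
  | succ k ih =>
    rw [sensSet_succ_eq_inter]
    exact ih.inter_right <| isClosed_biInter fun w _ =>
      isClosed_le continuous_const (continuous_sensFun s (k + 1))

theorem sensSet_nonempty (hZne : Z.Nonempty) (hZ : IsCompact Z) (k : ℕ) :
    (sensSet s Z k).Nonempty := by
  induction k with
  | zero => exact hZne
  | succ k ih =>
    obtain ⟨z, hz, hmax⟩ :=
      (isCompact_sensSet s Z hZ k).exists_isMaxOn ih (continuous_sensFun s (k + 1)).continuousOn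
    exact ⟨z, hz, fun w hw => hmax hw⟩

theorem sensFun_eq_of_mem_sensSet_succ {k : ℕ} {z w : X → ℝ} (hz : z ∈ sensSet s Z (k + 1))
    (hw : w ∈ sensSet s Z (k + 1)) : sensFun s (k + 1) z = sensFun s (k + 1) w :=
  le_antisymm (hw.2 z hz.1) (hz.2 w hw.1)

variable {s Z}

theorem moment_eq_of_mem_sensSet (hZ : ∀ z ∈ Z, ∑ x, z x = 1) {j k : ℕ} (hjk : j ≤ k)
    {z w : X → ℝ} (hz : z ∈ sensSet s Z k) (hw : w ∈ sensSet s Z k) :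
    moment s j z = moment s j w := by
  cases j with
  | zero =>
    have hZk := sensSet_antitone s Z (Nat.zero_le k)
    simp only [moment, pow_zero, one_mul, hZ z (hZk hz), hZ w (hZk hw)]
  | succ j =>
    have hZk := sensSet_antitone s Z hjk
    have := sensFun_eq_of_mem_sensSet_succ s Z (hZk hz) (hZk hw)
    rwa [sensFun_eq_neg_one_pow_mul_moment, sensFun_eq_neg_one_pow_mul_moment,
      mul_right_inj' (pow_ne_zero _ (neg_ne_zero.2 one_ne_zero))] at this

theorem sensSet_succ_eq_of_sensFun_eq {k : ℕ}
    (h : ∀ z ∈ sensSet s Z k, ∀ w ∈ sensSet s Z k, sensFun s (k + 1) z = sensFun s (k + 1) w) :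
    sensSet s Z (k + 1) = sensSet s Z k :=
  (sensSet_antitone s Z k.le_succ).antisymm fun z hz => ⟨hz, fun w hw => (h w hw z hz).le⟩

theorem sensSet_eq_of_card_image_le (hZ : ∀ z ∈ Z, ∑ x, z x = 1) {k : ℕ}
    (hk : #(univ.image s) ≤ k + 1) : ∀ n ≥ k, sensSet s Z n = sensSet s Z k := by
  have hmoment : ∀ n, ∀ z ∈ sensSet s Z k, ∀ w ∈ sensSet s Z k,
      moment s n z = moment s n w := by
    intro n z hz w hw
    obtain ⟨c, hc⟩ := exists_moment_eq_sum_range_card_image s n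
    rw [hc, hc]
    exact sum_congr rfl fun j hj =>
      congrArg _ (moment_eq_of_mem_sensSet hZ (by grind) hz hw)
  intro n hn
  induction n, hn using Nat.le_induction with
  | base => rfl
  | succ n _ ih =>
    rw [← ih]
    refine sensSet_succ_eq_of_sensFun_eq fun z hz w hw => ?_
    rw [ih] at hz hw
    rw [sensFun_eq_neg_one_pow_mul_moment, sensFun_eq_neg_one_pow_mul_moment, hmoment _ z hz w hw]

end SensSet

theorem infinitely_sensitive_set_nonempty_eq_M_general
    {X : Type*} [Fintype X]
    (s : X → ℝ) (Z : Set (X → ℝ)) (hZne : Z.Nonempty) (hZcomp : IsCompact Z)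
    (hZprob : ∀ z ∈ Z, (∀ x, 0 ≤ z x) ∧ ∑ x, z x = 1)
    (M : ℕ) (hM : M = (Finset.univ.image s).card) :
    (⋂ k : ℕ, sensSet s Z (k + 1)).Nonempty ∧
      (⋂ k : ℕ, sensSet s Z (k + 1)) = sensSet s Z M := by
  have hstable : ∀ n ≥ M, sensSet s Z n = sensSet s Z M :=
    sensSet_eq_of_card_image_le (fun z hz => (hZprob z hz).2) (by omega)
  have hS := iInter_succ_eq_of_antitone_of_eventually_eq (sensSet_antitone s Z) hstable
  exact ⟨hS ▸ sensSet_nonempty s Z hZne hZcomp M, hS⟩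

/-- For a nonempty compact set `Z` of probability vectors on a finite set `X`,
the set of infinitely sensitive policies `S = ∩_{k≥1} S^k` is nonempty and moreover
equals `S^M`, where `M` is the number of distinct values of `s`. -/
theorem infinitely_sensitive_set_nonempty_eq_M
    {X : Type*} [Fintype X] [Nonempty X]
    (s : X → ℝ) (Z : Set (X → ℝ)) (hZne : Z.Nonempty) (hZcomp : IsCompact Z)
    (hZprob : ∀ z ∈ Z, (∀ x, 0 ≤ z x) ∧ ∑ x, z x = 1)
    (M : ℕ) (hM : M = (Finset.univ.image s).card) :
    (⋂ k : ℕ, sensSet s Z (k + 1)).Nonempty ∧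
      (⋂ k : ℕ, sensSet s Z (k + 1)) = sensSet s Z M :=
  infinitely_sensitive_set_nonempty_eq_M_general s Z hZne hZcomp hZprob M hM
end

section
/- Let (Ω, F, P) be a probability space, let N₀ > 0, let 0 < μ ≤ b, let A ≥ 0, and let (X_j)_{j≥1} be independent random variables with 0 ≤ X_j ≤ b almost surely and E[X_j] ≥ μ for every j. Then there exist constants c₁ > 0 and c₂ > 0 such that for all N ≥ 1 and all a with 0 ≤ a ≤ A, c₁ · a ≤ E[ N · log₂(1 + a/(Σ_{j=1}^N X_j + N₀)) ] ≤ c₂ · a. -/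
/-!
Pointwise, `x / (1 + x) ≤ log (1 + x) ≤ x`, so the integrand is comparable to `N a / S` with
`S = ∑_{j<N} X_j + N₀`. Since `N₀ ≤ S ≤ N (b + N₀)`, the lower bound holds pointwise. For the
upper bound, `E[N / S]` must be bounded uniformly in `N`: by independence and Popoviciu's
inequality the sum has variance at most `N b² / 4`, so by Chebyshev it falls below half its mean
`N μ / 2` with probability at most `b² / (N μ²)`. There `N / S ≤ N / N₀`, elsewhere
`N / S ≤ 2 / μ`, whence `E[N / S] ≤ 2 / μ + b² / (N₀ μ²)`.
-/

open MeasureTheory ProbabilityTheory Finset Real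

lemma inv_mul_le_natCast_mul_logb_one_add_div {N : ℕ} (hN : 1 ≤ N) {a A B s : ℝ}
    (ha : 0 ≤ a) (haA : a ≤ A) (hs : 0 < s) (hsB : s ≤ N * B) :
    ((A + B) * log 2)⁻¹ * a ≤ N * logb 2 (1 + a / s) := by
  have hN' : (1 : ℝ) ≤ N := by exact_mod_cast hN
  have hB : 0 < B := pos_of_mul_pos_right (hs.trans_le hsB) (by positivity)
  have hlog : a / (s + a) ≤ log (1 + a / s) := by
    have h := one_sub_inv_le_log_of_pos (by positivity : 0 < 1 + a / s)
    have heq : 1 - (1 + a / s)⁻¹ = a / (s + a) := by field_simp; ring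
    rwa [heq] at h
  have hsa : s + a ≤ N * (A + B) := by nlinarith
  calc ((A + B) * log 2)⁻¹ * a = N * (a / (N * (A + B))) / log 2 := by
        field_simp
    _ ≤ N * (a / (s + a)) / log 2 := by gcongr
    _ ≤ N * log (1 + a / s) / log 2 := by gcongr
    _ = N * logb 2 (1 + a / s) := by rw [logb, mul_div_assoc]

lemma logb_one_add_div_le_div_log_mul_inv {b a s : ℝ} (hb : 1 < b) (ha : 0 ≤ a) (hs : 0 < s) :
    logb b (1 + a / s) ≤ a / log b * s⁻¹ := by
  have hlog : log (1 + a / s) ≤ a / s := by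
    linarith [log_le_sub_one_of_pos (by positivity : 0 < 1 + a / s)]
  calc logb b (1 + a / s) = log (1 + a / s) / log b := rfl
    _ ≤ a / s / log b := by gcongr; exact (log_pos hb).le
    _ = a / log b * s⁻¹ := by ring

section

variable {Ω : Type*} [MeasurableSpace Ω] {P : Measure Ω}

lemma memLp_of_ae_mem_Icc [IsFiniteMeasure P] {Y : Ω → ℝ} {b : ℝ} {p : ENNReal}
    (hY : AEStronglyMeasurable Y P) (hbdd : ∀ᵐ ω ∂P, 0 ≤ Y ω ∧ Y ω ≤ b) : MemLp Y p P :=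
  MemLp.of_bound hY b <| hbdd.mono fun _ hω => by
    rw [norm_eq_abs, abs_le]
    constructor <;> linarith [hω.1, hω.2]

lemma integrable_inv_of_ae_le [IsFiniteMeasure P] {S : Ω → ℝ} (hS : Measurable S) {c : ℝ}
    (hc : 0 < c) (hcS : ∀ᵐ ω ∂P, c ≤ S ω) : Integrable (fun ω => (S ω)⁻¹) P :=
  (integrable_const c⁻¹).mono' hS.inv.aestronglyMeasurable <| hcS.mono fun ω hω => by
    rw [norm_inv, norm_of_nonneg (hc.le.trans hω)]
    exact inv_anti₀ hc hω

lemma integrable_logb_one_add_div [IsFiniteMeasure P] {S : Ω → ℝ} (hS : Measurable S) {c : ℝ}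
    (hc : 0 < c) (hcS : ∀ᵐ ω ∂P, c ≤ S ω) {a : ℝ} (ha : 0 ≤ a) :
    Integrable (fun ω => logb 2 (1 + a / S ω)) P :=
  (integrable_const (a / log 2 * c⁻¹)).mono'
    (Measurable.aestronglyMeasurable (by unfold logb; fun_prop)) <| hcS.mono fun ω hω => by
      have hx : 0 ≤ a / S ω := div_nonneg ha (hc.le.trans hω)
      rw [norm_of_nonneg (logb_nonneg one_lt_two (by linarith))]
      calc logb 2 (1 + a / S ω) ≤ a / log 2 * (S ω)⁻¹ :=
            logb_one_add_div_le_div_log_mul_inv one_lt_two ha (hc.trans_le hω)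
        _ ≤ a / log 2 * c⁻¹ := by gcongr

lemma integral_inv_add_le [IsProbabilityMeasure P] {T : Ω → ℝ} (hT : Measurable T)
    (hT0 : ∀ᵐ ω ∂P, 0 ≤ T ω) {m c : ℝ} (hm : 0 < m) (hc : 0 < c) :
    ∫ ω, (T ω + c)⁻¹ ∂P ≤ 2 / m + P.real {ω | T ω < m / 2} / c := by
  set E := {ω | T ω < m / 2}
  have hE : MeasurableSet E := measurableSet_lt hT measurable_const
  have hle : ∀ᵐ ω ∂P, (T ω + c)⁻¹ ≤ 2 / m + E.indicator (fun _ => c⁻¹) ω := by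
    filter_upwards [hT0] with ω hω
    by_cases hωE : ω ∈ E
    · rw [Set.indicator_of_mem hωE]
      have : 0 ≤ 2 / m := by positivity
      linarith [inv_anti₀ hc (by linarith : c ≤ T ω + c)]
    · rw [Set.indicator_of_notMem hωE, add_zero, ← inv_div]
      exact inv_anti₀ (by positivity) (by simp only [E, Set.mem_ofPred_eq, not_lt] at hωE; linarith)
  calc ∫ ω, (T ω + c)⁻¹ ∂P ≤ ∫ ω, (2 / m + E.indicator (fun _ => c⁻¹) ω) ∂P :=
        integral_mono_ae
          (integrable_inv_of_ae_le (by fun_prop) hc (hT0.mono fun _ h => by linarith))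
          ((integrable_const _).add ((integrable_const _).indicator hE)) hle
    _ = 2 / m + P.real E / c := by
        rw [integral_add (integrable_const _) ((integrable_const _).indicator hE),
          integral_const, integral_indicator_const _ hE]
        simp [div_eq_mul_inv]

lemma measureReal_lt_half_le_four_mul_variance_div_sq [IsFiniteMeasure P] {T : Ω → ℝ}
    (hT : MemLp T 2 P) {m : ℝ} (hm : 0 < m) (hmean : m ≤ P[T]) :
    P.real {ω | T ω < m / 2} ≤ 4 * Var[T; P] / m ^ 2 := by
  have hsub : {ω | T ω < m / 2} ⊆ {ω | m / 2 ≤ |T ω - P[T]|} := fun ω hω => by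
    simp only [Set.mem_ofPred_eq] at hω ⊢
    rw [abs_sub_comm]
    exact le_abs.2 (Or.inl (by linarith))
  calc P.real {ω | T ω < m / 2} ≤ P.real {ω | m / 2 ≤ |T ω - P[T]|} := measureReal_mono hsub
    _ ≤ Var[T; P] / (m / 2) ^ 2 :=
        ENNReal.toReal_le_of_le_ofReal (div_nonneg (variance_nonneg T P) (by positivity))
          (meas_ge_le_variance_div_sq hT (by positivity))
    _ = 4 * Var[T; P] / m ^ 2 := by field_simp; ring

variable {ι : Type*} {X : ι → Ω → ℝ} {b : ℝ}

lemma ae_sum_mem_Icc (s : Finset ι) (hbdd : ∀ i, ∀ᵐ ω ∂P, 0 ≤ X i ω ∧ X i ω ≤ b) :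
    ∀ᵐ ω ∂P, 0 ≤ ∑ i ∈ s, X i ω ∧ ∑ i ∈ s, X i ω ≤ #s * b := by
  filter_upwards [(ae_ball_iff s.countable_toSet).2 fun i _ => hbdd i] with ω hω
  refine ⟨sum_nonneg fun i hi => (hω i hi).1, ?_⟩
  calc ∑ i ∈ s, X i ω ≤ ∑ _i ∈ s, b := sum_le_sum fun i hi => (hω i hi).2
    _ = #s * b := by rw [sum_const, nsmul_eq_mul]

lemma variance_sum_le_of_ae_mem_Icc [IsProbabilityMeasure P] (s : Finset ι)
    (hmeas : ∀ i, Measurable (X i)) (hindep : Set.Pairwise ↑s fun i j => X i ⟂ᵢ[P] X j)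
    (hbdd : ∀ i, ∀ᵐ ω ∂P, 0 ≤ X i ω ∧ X i ω ≤ b) :
    Var[fun ω => ∑ i ∈ s, X i ω; P] ≤ #s * (b / 2) ^ 2 := by
  rw [← sum_fn, IndepFun.variance_sum
    (fun i _ => memLp_of_ae_mem_Icc (hmeas i).aestronglyMeasurable (hbdd i)) hindep]
  calc ∑ i ∈ s, Var[X i; P] ≤ ∑ _i ∈ s, ((b - 0) / 2) ^ 2 :=
        sum_le_sum fun i _ => variance_le_sq_of_bounded (hbdd i) (hmeas i).aemeasurable
    _ = #s * (b / 2) ^ 2 := by rw [sum_const, nsmul_eq_mul, sub_zero]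

lemma card_mul_integral_inv_sum_add_le [IsProbabilityMeasure P] (s : Finset ι)
    (hmeas : ∀ i, Measurable (X i)) (hindep : Set.Pairwise ↑s fun i j => X i ⟂ᵢ[P] X j)
    (hbdd : ∀ i, ∀ᵐ ω ∂P, 0 ≤ X i ω ∧ X i ω ≤ b) {μ c : ℝ} (hμ : 0 < μ)
    (hmean : ∀ i, μ ≤ P[X i]) (hc : 0 < c) :
    #s * ∫ ω, (∑ i ∈ s, X i ω + c)⁻¹ ∂P ≤ 2 / μ + b ^ 2 / (c * μ ^ 2) := by
  rcases s.eq_empty_or_nonempty with rfl | hs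
  · simp only [card_empty, Nat.cast_zero, zero_mul]
    positivity
  set T := fun ω => ∑ i ∈ s, X i ω
  have hn : (0 : ℝ) < #s := by exact_mod_cast hs.card_pos
  have hT : Measurable T := by fun_prop
  have hTL2 : MemLp T 2 P :=
    memLp_finsetSum s fun i _ => memLp_of_ae_mem_Icc (hmeas i).aestronglyMeasurable (hbdd i)
  have hTmean : #s * μ ≤ P[T] := by
    rw [integral_finsetSum s fun i _ =>
      (memLp_of_ae_mem_Icc (p := 1) (hmeas i).aestronglyMeasurable (hbdd i)).integrable le_rfl]
    calc (#s : ℝ) * μ = ∑ _i ∈ s, μ := by rw [sum_const, nsmul_eq_mul]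
      _ ≤ ∑ i ∈ s, P[X i] := sum_le_sum fun i _ => hmean i
  have htail : P.real {ω | T ω < #s * μ / 2} ≤ b ^ 2 / (#s * μ ^ 2) := by
    refine (measureReal_lt_half_le_four_mul_variance_div_sq hTL2 (by positivity) hTmean).trans ?_
    have hvar := variance_sum_le_of_ae_mem_Icc s hmeas hindep hbdd
    calc 4 * Var[T; P] / (#s * μ) ^ 2 ≤ 4 * (#s * (b / 2) ^ 2) / (#s * μ) ^ 2 := by gcongr
      _ = b ^ 2 / (#s * μ ^ 2) := by field_simp; ring
  calc #s * ∫ ω, (T ω + c)⁻¹ ∂P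
      ≤ #s * (2 / (#s * μ) + P.real {ω | T ω < #s * μ / 2} / c) := by
        gcongr
        exact integral_inv_add_le hT ((ae_sum_mem_Icc s hbdd).mono fun _ h => h.1)
          (by positivity) hc
    _ ≤ #s * (2 / (#s * μ) + b ^ 2 / (#s * μ ^ 2) / c) := by gcongr
    _ = 2 / μ + b ^ 2 / (c * μ ^ 2) := by field_simp

end

/-- For independent random variables `X_j` bounded in `[0, b]` a.s. with
means at least `μ > 0`, the expectation `E[N · log₂(1 + a/(∑_{j<N} X_j + N₀))]` is bounded
between `c₁·a` and `c₂·a`, uniformly in `N ≥ 1` and `0 ≤ a ≤ A`. -/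
theorem expected_scaled_log_rate_linear_bounds
    {Ω : Type*} [MeasurableSpace Ω] (P : Measure Ω) [IsProbabilityMeasure P]
    (N₀ : ℝ) (hN₀ : 0 < N₀) (μ b : ℝ) (hμ : 0 < μ) (hμb : μ ≤ b)
    (A : ℝ) (hA : 0 ≤ A)
    (X : ℕ → Ω → ℝ) (hmeas : ∀ j, Measurable (X j))
    (hindep : iIndepFun X P)
    (hbdd : ∀ j, ∀ᵐ ω ∂P, 0 ≤ X j ω ∧ X j ω ≤ b)
    (hmean : ∀ j, μ ≤ ∫ ω, X j ω ∂P) :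
    ∃ c₁ > (0 : ℝ), ∃ c₂ > (0 : ℝ), ∀ N : ℕ, 1 ≤ N → ∀ a : ℝ, 0 ≤ a → a ≤ A →
      c₁ * a ≤ (∫ ω, (N : ℝ) *
          Real.logb 2 (1 + a / (∑ j ∈ Finset.range N, X j ω + N₀)) ∂P) ∧
      (∫ ω, (N : ℝ) *
          Real.logb 2 (1 + a / (∑ j ∈ Finset.range N, X j ω + N₀)) ∂P) ≤ c₂ * a := by
  have hb : 0 < b := hμ.trans_le hμb
  refine ⟨((A + (b + N₀)) * log 2)⁻¹, by positivity, (2 / μ + b ^ 2 / (N₀ * μ ^ 2)) / log 2,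
    by positivity, fun N hN a ha haA => ?_⟩
  set S := fun ω => ∑ j ∈ range N, X j ω + N₀
  have hSmeas : Measurable S := by fun_prop
  have hS : ∀ᵐ ω ∂P, N₀ ≤ S ω ∧ S ω ≤ N * (b + N₀) := by
    have hN' : (1 : ℝ) ≤ N := by exact_mod_cast hN
    filter_upwards [ae_sum_mem_Icc (range N) hbdd] with ω hω
    rw [card_range] at hω
    constructor <;> nlinarith [hω.1, hω.2]
  have hS₀ : ∀ᵐ ω ∂P, N₀ ≤ S ω := hS.mono fun _ h => h.1
  have hint := (integrable_logb_one_add_div hSmeas hN₀ hS₀ ha).const_mul N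
  constructor
  · calc ((A + (b + N₀)) * log 2)⁻¹ * a = ∫ _ω, ((A + (b + N₀)) * log 2)⁻¹ * a ∂P := by simp
      _ ≤ _ := integral_mono_ae (integrable_const _) hint <| hS.mono fun ω hω =>
          inv_mul_le_natCast_mul_logb_one_add_div hN ha haA (hN₀.trans_le hω.1) hω.2
  · calc ∫ ω, N * logb 2 (1 + a / S ω) ∂P ≤ ∫ ω, N * (a / log 2 * (S ω)⁻¹) ∂P :=
          integral_mono_ae hint
            (((integrable_inv_of_ae_le hSmeas hN₀ hS₀).const_mul _).const_mul _)
            (hS₀.mono fun ω hω => mul_le_mul_of_nonneg_left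
              (logb_one_add_div_le_div_log_mul_inv one_lt_two ha (hN₀.trans_le hω)) N.cast_nonneg)
      _ = a / log 2 * (#(range N) * ∫ ω, (S ω)⁻¹ ∂P) := by
          rw [integral_const_mul, integral_const_mul, card_range]; ring
      _ ≤ a / log 2 * (2 / μ + b ^ 2 / (N₀ * μ ^ 2)) := by
          gcongr
          exact card_mul_integral_inv_sum_add_le (range N) hmeas
            (fun i _ j _ hij => hindep.indepFun hij) hbdd hμ hmean hN₀
      _ = (2 / μ + b ^ 2 / (N₀ * μ ^ 2)) / log 2 * a := by ring
end

section
/- Let Q ≥ 1 be an integer, let 0 < s ≤ 1, and let F : ℕ → ℝ satisfy F(j) ≥ 0 for all j and Σ_{j=0}^∞ F(j) = 1. Consider the Markov transition matrix P on the state space {0, 1, …, Q} defined by: P(0,0) = 1 − s + s·F(0); P(0,j) = s·F(j) for 1 ≤ j ≤ Q−1; P(0,Q) = s·(1 − Σ_{j=0}^{Q−1} F(j)); P(j, j−1) = 1 for 1 ≤ j ≤ Q; and all other entries zero. Set c = Σ_{k=1}^{Q} (1 − Σ_{j=0}^{k−1} F(j)), and define π(0) = 1/(1 + s·c) and π(k)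 = s·π(0)·(1 − Σ_{j=0}^{k−1} F(j)) for 1 ≤ k ≤ Q. Then π is a probability vector on {0,…,Q} (all entries nonnegative and summing to 1), P is a stochastic matrix (each row nonnegative and summing to 1), and π is stationary for P, i.e. Σ_{q=0}^{Q} π(q)·P(q, k) = π(k) for every k ∈ {0,…,Q}. -/
open Finset

/-- Transition matrix of the queue process on states `{0, 1, …, Q}`: from state `0`,
arrivals of size `j` are accepted with probability `s` (truncated at `Q`); from a
nonempty state `j ≥ 1` the chain moves deterministically to `j − 1`. -/
noncomputable def queueP (Q : ℕ) (s : ℝ) (F : ℕ → ℝ) (i j : Fin (Q + 1)) : ℝ :=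
  if (i : ℕ) = 0 then
    if (j : ℕ) = 0 then 1 - s + s * F 0
    else if (j : ℕ) = Q then s * (1 - ∑ m ∈ Finset.range Q, F m)
    else s * F (j : ℕ)
  else if (j : ℕ) + 1 = (i : ℕ) then 1 else 0

/-- The candidate stationary distribution: `π(0) = 1/(1 + s·c)` and
`π(k) = s·π(0)·(1 − ∑_{j<k} F(j))` for `k ≥ 1`, where
`c = ∑_{k=1}^{Q} (1 − ∑_{j<k} F(j))`. -/
noncomputable def queuePi (Q : ℕ) (s : ℝ) (F : ℕ → ℝ) (k : Fin (Q + 1)) : ℝ :=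
  if (k : ℕ) = 0 then
    1 / (1 + s * ∑ m ∈ Finset.Icc 1 Q, (1 - ∑ j ∈ Finset.range m, F j))
  else
    s * (1 / (1 + s * ∑ m ∈ Finset.Icc 1 Q, (1 - ∑ j ∈ Finset.range m, F j))) *
      (1 - ∑ j ∈ Finset.range (k : ℕ), F j)

/-! Stationarity is a local balance: column `k` of the matrix has at most two nonzero entries,
row `0` (a batch of size `k` arrives) and row `k + 1` (one packet leaves). So the stationary
equation at `k ≥ 1` reads `π(k) = π(0)·P(0,k) + π(k+1)`, which the tail masses
`1 − ∑_{j<k} F(j)` satisfy since consecutive ones differ by `F(k)`; at `k = 0` it follows from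
`P(0,0) = 1 − s·(1 − F(0))`. -/

theorem sum_Icc_one_eq_sum_range_succ {M : Type*} [AddCommMonoid M] (f : ℕ → M) (n : ℕ) :
    ∑ m ∈ Icc 1 n, f m = ∑ i ∈ range n, f (i + 1) := by
  rw [range_eq_Ico, sum_Ico_add', ← Ico_add_one_right_eq_Icc, zero_add]

noncomputable def tailMass (F : ℕ → ℝ) (k : ℕ) : ℝ := 1 - ∑ j ∈ range k, F j

section TailMass

variable {F : ℕ → ℝ}

theorem tailMass_one : tailMass F 1 = 1 - F 0 := by
  simp [tailMass]

theorem tailMass_succ (k : ℕ) : tailMass F (k + 1) = tailMass F k - F k := by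
  rw [tailMass, tailMass, sum_range_succ]
  ring

theorem tailMass_nonneg (hF0 : ∀ j, 0 ≤ F j) (hFsum : ∑' j, F j = 1) (k : ℕ) :
    0 ≤ tailMass F k := by
  have hsummable : Summable F := by
    by_contra h
    simp [tsum_eq_zero_of_not_summable h] at hFsum
  have := hsummable.sum_le_tsum (range k) fun j _ => hF0 j
  rw [tailMass]
  linarith

end TailMass

section QueueChain

variable {Q : ℕ} {s : ℝ} {F : ℕ → ℝ}

theorem queuePi_zero :
    queuePi Q s F 0 = 1 / (1 + s * ∑ m ∈ Icc 1 Q, tailMass F m) := by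
  simp [queuePi, tailMass]

theorem queuePi_of_ne_zero {k : Fin (Q + 1)} (hk : (k : ℕ) ≠ 0) :
    queuePi Q s F k = s * queuePi Q s F 0 * tailMass F k := by
  simp [queuePi, tailMass, hk]

theorem queuePi_nonneg (hs : 0 ≤ s) (hF0 : ∀ j, 0 ≤ F j) (hFsum : ∑' j, F j = 1)
    (k : Fin (Q + 1)) : 0 ≤ queuePi Q s F k := by
  have hπ0 : 0 ≤ queuePi Q s F 0 := by
    rw [queuePi_zero]
    have := sum_nonneg fun m (_ : m ∈ Icc 1 Q) => tailMass_nonneg hF0 hFsum m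
    positivity
  by_cases hk : (k : ℕ) = 0
  · rwa [show k = 0 from Fin.ext hk]
  · rw [queuePi_of_ne_zero hk]
    exact mul_nonneg (mul_nonneg hs hπ0) (tailMass_nonneg hF0 hFsum k)

theorem sum_queuePi (hs : 0 ≤ s) (hF0 : ∀ j, 0 ≤ F j) (hFsum : ∑' j, F j = 1) :
    ∑ k : Fin (Q + 1), queuePi Q s F k = 1 := by
  set c := ∑ m ∈ Icc 1 Q, tailMass F m with hc_def
  have hc : 0 ≤ c := sum_nonneg fun m _ => tailMass_nonneg hF0 hFsum m
  have hsucc : ∑ i : Fin Q, queuePi Q s F i.succ = s * queuePi Q s F 0 * c := by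
    rw [hc_def, sum_Icc_one_eq_sum_range_succ, mul_sum,
      ← Fin.sum_univ_eq_sum_range (fun i => s * queuePi Q s F 0 * tailMass F (i + 1))]
    exact sum_congr rfl fun i _ => queuePi_of_ne_zero (Fin.val_ne_of_ne (Fin.succ_ne_zero i))
  have hN : 0 < 1 + s * c := by positivity
  rw [Fin.sum_univ_succ, hsucc, queuePi_zero, ← hc_def]
  field_simp

theorem queueP_zero_zero : queueP Q s F 0 0 = 1 - s + s * F 0 := by
  simp [queueP]

theorem queueP_zero_last (hQ : Q ≠ 0) : queueP Q s F 0 (Fin.last Q) = s * tailMass F Q := by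
  simp [queueP, tailMass, hQ]

theorem queueP_zero_of_ne {j : Fin (Q + 1)} (hj0 : (j : ℕ) ≠ 0) (hjQ : (j : ℕ) ≠ Q) :
    queueP Q s F 0 j = s * F j := by
  simp [queueP, hj0, hjQ]

theorem queueP_of_ne_zero {i : Fin (Q + 1)} (hi : (i : ℕ) ≠ 0) (j : Fin (Q + 1)) :
    queueP Q s F i j = if (j : ℕ) + 1 = i then 1 else 0 := by
  simp [queueP, hi]

theorem queueP_nonneg (hs0 : 0 ≤ s) (hs1 : s ≤ 1) (hF0 : ∀ j, 0 ≤ F j)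
    (hFsum : ∑' j, F j = 1) (i j : Fin (Q + 1)) : 0 ≤ queueP Q s F i j := by
  have := tailMass_nonneg hF0 hFsum Q
  unfold queueP tailMass at *
  split_ifs
  · nlinarith [hF0 0]
  all_goals first | positivity | exact mul_nonneg hs0 (hF0 _)

theorem sum_queueP_zero (hQ : Q ≠ 0) : ∑ j : Fin (Q + 1), queueP Q s F 0 j = 1 := by
  have hrow : ∀ i : Fin Q,
      queueP Q s F 0 i.castSucc = (if (i : ℕ) = 0 then 1 - s else 0) + s * F i := by
    intro i
    by_cases hi : (i : ℕ) = 0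
    · simp [queueP, hi]
    · rw [queueP_zero_of_ne hi i.is_lt.ne, if_neg hi, zero_add, Fin.val_castSucc]
  rw [Fin.sum_univ_castSucc, queueP_zero_last hQ, sum_congr rfl fun i _ => hrow i,
    sum_add_distrib, ← mul_sum, Fin.sum_univ_eq_sum_range (fun i => if i = 0 then 1 - s else 0),
    Fin.sum_univ_eq_sum_range F, sum_ite_eq', if_pos (mem_range.2 (Nat.pos_of_ne_zero hQ)),
    tailMass]
  ring

theorem sum_queueP_of_ne_zero {i : Fin (Q + 1)} (hi : (i : ℕ) ≠ 0) :
    ∑ j : Fin (Q + 1), queueP Q s F i j = 1 := by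
  have hprev : (i : ℕ) - 1 < Q + 1 := by omega
  rw [Fintype.sum_eq_single ⟨i - 1, hprev⟩, queueP_of_ne_zero hi,
    if_pos (show (i : ℕ) - 1 + 1 = i by omega)]
  intro j hj
  rw [queueP_of_ne_zero hi, if_neg]
  exact fun h => hj (Fin.ext (show (j : ℕ) = i - 1 by omega))

theorem sum_queueP (hQ : Q ≠ 0) (i : Fin (Q + 1)) :
    ∑ j : Fin (Q + 1), queueP Q s F i j = 1 := by
  by_cases hi : (i : ℕ) = 0
  · rw [show i = 0 from Fin.ext hi]
    exact sum_queueP_zero hQ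
  · exact sum_queueP_of_ne_zero hi

theorem sum_mul_queueP_of_lt (v : Fin (Q + 1) → ℝ) {k : Fin (Q + 1)} (hk : (k : ℕ) < Q) :
    ∑ q, v q * queueP Q s F q k = v 0 * queueP Q s F 0 k + v ⟨k + 1, by omega⟩ := by
  rw [Fintype.sum_eq_add 0 ⟨k + 1, by omega⟩ (Fin.ne_of_val_ne (by simp)),
    queueP_of_ne_zero (i := ⟨k + 1, _⟩) k.val.succ_ne_zero, if_pos rfl, mul_one]
  rintro q ⟨hq0, hqk⟩
  rw [queueP_of_ne_zero (Fin.val_ne_of_ne hq0), if_neg, mul_zero]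
  exact fun h => hqk (Fin.ext h.symm)

theorem sum_mul_queueP_last (v : Fin (Q + 1) → ℝ) :
    ∑ q, v q * queueP Q s F q (Fin.last Q) = v 0 * queueP Q s F 0 (Fin.last Q) := by
  refine Fintype.sum_eq_single 0 fun q hq => ?_
  rw [queueP_of_ne_zero (Fin.val_ne_of_ne hq), if_neg, mul_zero]
  simp only [Fin.val_last]
  omega

theorem queuePi_stationary (hQ : Q ≠ 0) (k : Fin (Q + 1)) :
    ∑ q, queuePi Q s F q * queueP Q s F q k = queuePi Q s F k := by
  have hπ_succ (hk : (k : ℕ) < Q) :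
      queuePi Q s F ⟨k + 1, by omega⟩ = s * queuePi Q s F 0 * tailMass F (k + 1) :=
    queuePi_of_ne_zero k.val.succ_ne_zero
  by_cases hk0 : (k : ℕ) = 0
  · have hk : (k : ℕ) < Q := by omega
    rw [sum_mul_queueP_of_lt _ hk, hπ_succ hk, show k = 0 from Fin.ext hk0, queueP_zero_zero,
      Fin.val_zero, zero_add, tailMass_one]
    ring
  by_cases hk : (k : ℕ) < Q
  · rw [sum_mul_queueP_of_lt _ hk, hπ_succ hk, queueP_zero_of_ne hk0 hk.ne,
      queuePi_of_ne_zero hk0, tailMass_succ]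
    ring
  · obtain rfl : k = Fin.last Q := Fin.ext (by simp only [Fin.val_last]; omega)
    rw [sum_mul_queueP_last, queueP_zero_last hQ, queuePi_of_ne_zero (k := Fin.last Q) hQ,
      Fin.val_last]
    ring

end QueueChain

/-- For `Q ≥ 1`, `0 < s ≤ 1` and an arrival pmf `F`, the vector `π` defined
above is a probability vector, `P` is a stochastic matrix, and `π` is stationary for `P`. -/
theorem queue_stationary_distribution
    (Q : ℕ) (hQ : 1 ≤ Q) (s : ℝ) (hs0 : 0 < s) (hs1 : s ≤ 1)
    (F : ℕ → ℝ) (hF0 : ∀ j, 0 ≤ F j) (hFsum : ∑' j, F j = 1) :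
    (∀ q : Fin (Q + 1), 0 ≤ queuePi Q s F q) ∧
    (∑ q : Fin (Q + 1), queuePi Q s F q = 1) ∧
    (∀ q : Fin (Q + 1), (∀ j, 0 ≤ queueP Q s F q j) ∧
      ∑ j : Fin (Q + 1), queueP Q s F q j = 1) ∧
    (∀ k : Fin (Q + 1), ∑ q : Fin (Q + 1), queuePi Q s F q * queueP Q s F q k
      = queuePi Q s F k) := by
  have hQ0 : Q ≠ 0 := Nat.one_le_iff_ne_zero.mp hQ
  refine ⟨queuePi_nonneg hs0.le hF0 hFsum, sum_queuePi hs0.le hF0 hFsum,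
    fun q => ⟨queueP_nonneg hs0.le hs1 hF0 hFsum q, sum_queueP hQ0 q⟩, queuePi_stationary hQ0⟩
end
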